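/- arXiv:math/0610169 — 2 statements merged into one kernel-verified Lean document; each statement's English description precedes it below -/
import Mathlib

section
/- Let $k=1$ and $G=\mathbb{C}^{\times}\times SL_2(\mathbb{C})$, let $V=V_{1,1}\oplus V_{1,4}\oplus V_{2,4}\oplus V_{3,3}\oplus V_{4,2}$ (where the character $m\in\mathbb{Z}$ acts as $t\mapsto t^{m}$), and let $v=(v_1,\;x^2y^2,\;x^2(y-x)^2,\;xy(y-x),\;x^2)\in V$, where $v_1$ is any nonzero linear form. Then the orbit closure $\overline{G\langle v\rangle}\subseteq\mathbb{P}(V)$ contains infinitely many $G$-orbits. -/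
open scoped BigOperators

noncomputable section

/-- `SL₂(ℂ)`. -/
abbrev SL2 : Type := Matrix.SpecialLinearGroup (Fin 2) ℂ

/-- The coefficient space of `V = ⊕ᵢ V_{χᵢ,nᵢ}`: the `i`-th component is the space of
binary forms of degree `n i`, recorded by its `n i + 1` coefficients. -/
abbrev BinVec {s : ℕ} (n : Fin s → ℕ) : Type := (i : Fin s) → Fin (n i + 1) → ℂ

/-- The exponent multiset of the monomial `x^(n-j) y^j`. -/
def monExp (n j : ℕ) : Fin 2 →₀ ℕ :=
  Finsupp.single (0 : Fin 2) (n - j) + Finsupp.single (1 : Fin 2) j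

/-- The binary form of degree `n` with coefficient vector `c`:
`∑ⱼ c j • x^(n-j) y^j`, as a polynomial in the two variables `X 0 = x`, `X 1 = y`. -/
def toPoly {n : ℕ} (c : Fin (n + 1) → ℂ) : MvPolynomial (Fin 2) ℂ :=
  ∑ j : Fin (n + 1), MvPolynomial.monomial (monExp n (j : ℕ)) (c j)

/-- The coefficient vector of (the degree-`n` homogeneous part of) a polynomial. -/
def ofPoly (n : ℕ) (f : MvPolynomial (Fin 2) ℂ) : Fin (n + 1) → ℂ :=
  fun j => MvPolynomial.coeff (monExp n (j : ℕ)) f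

/-- The substitution action of `SL₂(ℂ)` on binary forms:
`f(x,y) ↦ f(κx + μy, λx + νy)` for `g = !![κ, λ; μ, ν]`. -/
def subst (g : SL2) (f : MvPolynomial (Fin 2) ℂ) : MvPolynomial (Fin 2) ℂ :=
  MvPolynomial.aeval
    (fun j : Fin 2 =>
      MvPolynomial.C ((g : Matrix (Fin 2) (Fin 2) ℂ) 0 j) * MvPolynomial.X 0 +
      MvPolynomial.C ((g : Matrix (Fin 2) (Fin 2) ℂ) 1 j) * MvPolynomial.X 1) f

/-- The value `χ(t) = t₁^{χ⁽¹⁾} ⋯ t_k^{χ⁽ᵏ⁾}` of the character `χ ∈ ℤᵏ` at `t ∈ (ℂˣ)ᵏ`. -/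
def charVal {k : ℕ} (χ : Fin k → ℤ) (t : Fin k → ℂˣ) : ℂ :=
  ∏ j, ((t j : ℂ) ^ χ j)

/-- The action of `G = (ℂˣ)ᵏ × SL₂(ℂ)` on `V = ⊕ᵢ V_{χᵢ,nᵢ}`. -/
def Gact {k s : ℕ} (χ : Fin s → Fin k → ℤ) (n : Fin s → ℕ)
    (g : (Fin k → ℂˣ) × SL2) (v : BinVec n) : BinVec n :=
  fun i => ofPoly (n i) (MvPolynomial.C (charVal (χ i) g.1) * subst g.2 (toPoly (v i)))

/-- The `G`-orbit of `v ∈ V`. -/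
def Gorbit {k s : ℕ} (χ : Fin s → Fin k → ℤ) (n : Fin s → ℕ) (v : BinVec n) :
    Set (BinVec n) :=
  {w | ∃ g : (Fin k → ℂˣ) × SL2, w = Gact χ n g v}

/-- The upper triangular element `!![κ, l; 0, κ⁻¹]` of `SL₂(ℂ)`. -/
def upperSL (κ : ℂˣ) (l : ℂ) : SL2 :=
  ⟨!![(κ : ℂ), l; 0, ((κ⁻¹ : ℂˣ) : ℂ)], by
    rw [Matrix.det_fin_two_of]; simp⟩

/-- The orbit of `v ∈ V` under the Borel subgroup
`B = (ℂˣ)ᵏ × {upper triangular matrices} ⊆ G`. -/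
def Borbit {k s : ℕ} (χ : Fin s → Fin k → ℤ) (n : Fin s → ℕ) (v : BinVec n) :
    Set (BinVec n) :=
  {w | ∃ (t : Fin k → ℂˣ) (κ : ℂˣ) (l : ℂ), w = Gact χ n (t, upperSL κ l) v}

/-- The Zariski topology on affine space `ℂ^σ`: generated by the complements of
hypersurfaces, i.e. the closed sets are the zero loci of sets of polynomials. -/
def zTop (σ : Type) : TopologicalSpace (σ → ℂ) :=
  TopologicalSpace.generateFrom
    {U | ∃ p : MvPolynomial σ ℂ, U = {x | MvPolynomial.eval x p ≠ 0}}

/-- The Zariski topology on `V`, transported along the coordinate identification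
`V ≅ ℂ^{Σᵢ (nᵢ+1)}`. -/
def vTop {s : ℕ} (n : Fin s → ℕ) : TopologicalSpace (BinVec n) :=
  TopologicalSpace.induced
    (fun v (q : Σ i : Fin s, Fin (n i + 1)) => v q.1 q.2)
    (zTop (Σ i : Fin s, Fin (n i + 1)))

/-- Zariski closure in `V`. -/
def vClosure {s : ℕ} {n : Fin s → ℕ} (S : Set (BinVec n)) : Set (BinVec n) :=
  @closure _ (vTop n) S

/-- `e(∞) = ∑_{a ∈ ℂ} e(a)` for a multiplicity function `e : ℂ →₀ ℕ`. -/
def eInf (e : ℂ →₀ ℕ) : ℕ := e.sum fun _ m => m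

/-- The normalized binary form `x^(n - e(∞)) ∏_{a ∈ ℂ} (a x + y)^{e(a)}`
attached to a multiplicity function `e`. -/
def normForm (n : ℕ) (e : ℂ →₀ ℕ) : MvPolynomial (Fin 2) ℂ :=
  MvPolynomial.X 0 ^ (n - eInf e) *
    ∏ a ∈ e.support, (MvPolynomial.C a * MvPolynomial.X 0 + MvPolynomial.X 1) ^ e a

/-- The pairing `⟨χ'ᵢ, R⟩` of a characteristic point `χ'ᵢ = (χᵢ, nᵢ) ∈ ℚ^{k+1}` with a
vector `R = (r₁, …, r_k, p) ∈ ℚ^{k+1}`. -/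
def pairQ {k : ℕ} (χi : Fin k → ℤ) (ni : ℕ) (R : (Fin k → ℚ) × ℚ) : ℚ :=
  (∑ j, (χi j : ℚ) * R.1 j) + (ni : ℚ) * R.2

/-- `pᵢ(d) = ∏_{a ∈ ℂ, a ≠ d} (a - d)^{e(a)}`. -/
def pval (e : ℂ →₀ ℕ) (d : ℂ) : ℂ :=
  ∏ a ∈ e.support \ {d}, (a - d) ^ e a

/-- The standard vector `v(d, R)`, whose `i`-th component is `pᵢ(d) x^{nᵢ}` for
`i ∈ I(R) = {i : ⟨χ'ᵢ, R⟩ = 0}` and `0` otherwise. -/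
def standardVec {k s : ℕ} (χ : Fin s → Fin k → ℤ) (n : Fin s → ℕ)
    (e : Fin s → ℂ →₀ ℕ) (d : ℂ) (R : (Fin k → ℚ) × ℚ) : BinVec n :=
  fun i =>
    if pairQ (χ i) (n i) R = 0 then
      ofPoly (n i) (MvPolynomial.C (pval (e i) d) * MvPolynomial.X 0 ^ (n i))
    else 0

/-- The Zariski topology on `ℙ(V)`, coinduced from the Zariski topology on `V ∖ {0}`. -/
def pTop {s : ℕ} (n : Fin s → ℕ) :
    TopologicalSpace (Projectivization ℂ (BinVec n)) :=
  TopologicalSpace.coinduced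
    (fun v : {v : BinVec n // v ≠ 0} => Projectivization.mk ℂ v.1 v.2)
    (TopologicalSpace.induced Subtype.val (vTop n))

/-- Zariski closure in `ℙ(V)`. -/
def pClosure {s : ℕ} {n : Fin s → ℕ} (S : Set (Projectivization ℂ (BinVec n))) :
    Set (Projectivization ℂ (BinVec n)) :=
  @closure _ (pTop n) S

/-- The `G`-orbit of the point `⟨v⟩ ∈ ℙ(V)`. -/
def pOrbit {k s : ℕ} (χ : Fin s → Fin k → ℤ) (n : Fin s → ℕ) (v : BinVec n) :
    Set (Projectivization ℂ (BinVec n)) :=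
  {q | ∃ (g : (Fin k → ℂˣ) × SL2) (h : Gact χ n g v ≠ 0),
      q = Projectivization.mk ℂ (Gact χ n g v) h}
/-- The curve `t ↦ !![t^p, c·h(t)·t^q; 0, t^{-p}]` in `SL₂(ℂ)`. -/
def curveMat (p q : ℤ) (c : ℂ) (h : Polynomial ℂ) (t : ℂˣ) : SL2 :=
  ⟨!![((t ^ p : ℂˣ) : ℂ), c * Polynomial.eval (t : ℂ) h * ((t ^ q : ℂˣ) : ℂ);
      0, ((t ^ (-p) : ℂˣ) : ℂ)], by
    rw [Matrix.det_fin_two_of]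
    simp only [zpow_neg, Units.val_zpow_eq_zpow_val, Units.val_inv_eq_inv_val, mul_zero, sub_zero]
    exact mul_inv_cancel₀ (zpow_ne_zero _ (Units.ne_zero t))⟩

/-- The substitution action of `SL₂(ℂ)` on a binary form of degree `m`,
in coefficient coordinates. -/
def slCoefAct (m : ℕ) (g : SL2) (c : Fin (m + 1) → ℂ) : Fin (m + 1) → ℂ :=
  ofPoly m (subst g (toPoly c))

/-- The (diagonal) substitution action of `SL₂(ℂ)` on `V = ⊕ᵢ V_{nᵢ}`. -/
def slAct {s : ℕ} {n : Fin s → ℕ} (g : SL2) (v : BinVec n) : BinVec n :=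
  fun i => slCoefAct (n i) g (v i)

/-- The `SL₂(ℂ)`-orbit of `⟨v⟩ ∈ ℙ(V)`. -/
def slPOrbit {s : ℕ} (n : Fin s → ℕ) (v : BinVec n) :
    Set (Projectivization ℂ (BinVec n)) :=
  {q | ∃ (g : SL2) (h : slAct g v ≠ 0), q = Projectivization.mk ℂ (slAct g v) h}

/-- The Zariski topology on `ℙ(V_{n₁}) × ⋯ × ℙ(V_{n_m})`, coinduced from the Zariski
topology on the locus of vectors in `⊕ᵢ V_{nᵢ}` with all components nonzero. -/
def prodPTop {m : ℕ} (n : Fin m → ℕ) :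
    TopologicalSpace ((i : Fin m) → Projectivization ℂ (Fin (n i + 1) → ℂ)) :=
  TopologicalSpace.coinduced
    (fun v : {v : BinVec n // ∀ i, v i ≠ 0} =>
      fun i => Projectivization.mk ℂ (v.1 i) (v.2 i))
    (TopologicalSpace.induced Subtype.val (vTop n))

/-- The diagonal `SL₂(ℂ)`-orbit of the point `(⟨v₁⟩, …, ⟨v_m⟩)` in
`ℙ(V_{n₁}) × ⋯ × ℙ(V_{n_m})`. -/
def prodOrbit {m : ℕ} (n : Fin m → ℕ) (v : BinVec n) :
    Set ((i : Fin m) → Projectivization ℂ (Fin (n i + 1) → ℂ)) :=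
  {q | ∃ g : SL2, ∀ i, ∃ h : slCoefAct (n i) g (v i) ≠ 0,
      q i = Projectivization.mk ℂ (slCoefAct (n i) g (v i)) h}

/-- The dimension of a subset of `V`, i.e. the topological Krull dimension of the
subspace in the Zariski topology (with `⊥` collapsed to `0`). -/
def vDim {s : ℕ} {n : Fin s → ℕ} (S : Set (BinVec n)) : ℕ∞ :=
  letI := vTop n
  WithBot.unbotD 0 (topologicalKrullDim S)

/-- `d(X, H)`: the minimal codimension in `X` of an orbit (for the orbit map `orb`)
of a point of `X`. -/
def minOrbitCodim {s : ℕ} {n : Fin s → ℕ} (X : Set (BinVec n))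
    (orb : BinVec n → Set (BinVec n)) : ℕ∞ :=
  ⨅ x ∈ X, (vDim X - vDim (orb x))

/-- The modality `mod(Y, H) = max_X d(X, H)`, the maximum over all irreducible
invariant subvarieties `X ⊆ Y`. -/
def modality {s : ℕ} {n : Fin s → ℕ} (Y : Set (BinVec n))
    (orb : BinVec n → Set (BinVec n)) : ℕ∞ :=
  ⨆ X ∈ {X : Set (BinVec n) |
      X ⊆ Y ∧ (letI := vTop n; IsIrreducible X) ∧ ∀ x ∈ X, orb x ⊆ X},
    minOrbitCodim X orb

/-- The pairing `⟨(1, χᵢ, nᵢ), R⟩` of a hatted characteristic point with a vector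
`R ∈ ℚ^{k+2}`. -/
def hatPair {k : ℕ} (χi : Fin k → ℤ) (ni : ℕ) (R : (Fin (k + 1) → ℚ) × ℚ) : ℚ :=
  R.1 0 + (∑ j, (χi j : ℚ) * R.1 j.succ) + (ni : ℚ) * R.2


/-!
For `d ∈ ℂ` let `w_d = (0, 0, (d-1)² x⁴, d(d-1) x³, x²)`. Apply to `v` first the unipotent
substitution `y ↦ d x + y`, then the one-parameter subgroup `t ↦ (t⁻¹, diag(t⁻¹, t))`, and rescale
by `t⁶`: the coefficient of `x^(nᵢ-j) y^j` in the `i`-th component gets multiplied by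
`t^(6 - χᵢ - nᵢ + 2j)`, a nonnegative power of `t`. So the result is a polynomial curve in `V`
whose value at `t = 0` is `w_d`, and since a nonzero polynomial in `t` has finitely many roots,
`⟨w_d⟩` lies in the Zariski closure of `G⟨v⟩`.

The leading coefficient of `g · (c xⁿ)` is `χ(τ) c aⁿ`, where `τ` is the torus part of `g` and
`a` the upper-left entry of its `SL₂` part. So if `⟨w_d'⟩` lies in the orbit of `⟨w_d⟩`, the ratio
`c₃² / (c₂ c₄)` of the leading coefficients of the last three components is the same for both,
that is `d² = d'²`; the points `⟨w_d⟩` with `d = 2, 3, 4, …` lie in pairwise distinct orbits.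
-/

open MvPolynomial

lemma eval_toPoly {n : ℕ} (c : Fin (n + 1) → ℂ) (p : Fin 2 → ℂ) :
    eval p (toPoly c) = ∑ j, c j * p 0 ^ (n - j) * p 1 ^ (j : ℕ) := by
  simp [toPoly, monExp, eval_monomial, Finsupp.prod_add_index, pow_add, mul_assoc]

lemma eval_single_toPoly {n : ℕ} (c : Fin (n + 1) → ℂ) :
    eval (Pi.single 0 1) (toPoly c) = c 0 := by
  simp [eval_toPoly, Fin.sum_univ_succ]

lemma toPoly_single_zero {n : ℕ} (c : ℂ) :
    toPoly (Pi.single 0 c : Fin (n + 1) → ℂ) = C c * X 0 ^ n :=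
  MvPolynomial.funext fun p => by simp [eval_toPoly, Fin.sum_univ_succ]

lemma ofPoly_toPoly {n : ℕ} (c : Fin (n + 1) → ℂ) : ofPoly n (toPoly c) = c := by
  funext j
  have hinj : ∀ i : Fin (n + 1), monExp n i = monExp n j ↔ i = j := fun i =>
    ⟨fun h => Fin.ext (by simpa [monExp] using DFunLike.congr_fun h 1), fun h => h ▸ rfl⟩
  simp [ofPoly, toPoly, coeff_sum, coeff_monomial, hinj]

lemma toPoly_injective {n : ℕ} : Function.Injective (toPoly (n := n)) :=
  Function.LeftInverse.injective ofPoly_toPoly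

lemma isHomogeneous_toPoly {n : ℕ} (c : Fin (n + 1) → ℂ) : (toPoly c).IsHomogeneous n :=
  IsHomogeneous.sum _ _ _ fun j _ => isHomogeneous_monomial _ <| by
    simp [monExp, Finsupp.degree_eq_sum, Nat.sub_add_cancel (Fin.is_le j)]

lemma eq_monExp_of_degree_eq {n : ℕ} {m : Fin 2 →₀ ℕ} (hm : m.degree = n) :
    m = monExp n (m 1) := by
  rw [Finsupp.degree_eq_sum, Fin.sum_univ_two] at hm
  ext i
  fin_cases i
  · simp only [Fin.zero_eta, Fin.isValue, monExp, Finsupp.coe_add, Pi.add_apply,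
      Finsupp.single_eq_same, Finsupp.single_eq_of_ne, ne_eq, zero_ne_one, not_false_eq_true,
      add_zero]
    omega
  · simp [monExp]

lemma toPoly_ofPoly {n : ℕ} {F : MvPolynomial (Fin 2) ℂ} (hF : F.IsHomogeneous n) :
    toPoly (ofPoly n F) = F := by
  ext m
  by_cases hm : m.degree = n
  · have hj : m 1 < n + 1 := by
      rw [← hm, Finsupp.degree_eq_sum, Fin.sum_univ_two]; omega
    rw [eq_monExp_of_degree_eq hm]
    exact congrFun (ofPoly_toPoly (ofPoly n F)) ⟨m 1, hj⟩
  · rw [hF.coeff_eq_zero hm, (isHomogeneous_toPoly _).coeff_eq_zero hm]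

lemma eval_subst (g : SL2) (f : MvPolynomial (Fin 2) ℂ) (p : Fin 2 → ℂ) :
    eval p (subst g f) = eval (Matrix.vecMul p g) f := by
  induction f using MvPolynomial.induction_on with
  | C a => simp [subst]
  | add f g hf hg => simp_all [subst]
  | mul_X f j hf => simp_all [subst, Matrix.vecMul, dotProduct, Fin.sum_univ_two, mul_comm]

lemma isHomogeneous_subst {n : ℕ} {f : MvPolynomial (Fin 2) ℂ} (hf : f.IsHomogeneous n)
    (g : SL2) : (subst g f).IsHomogeneous n := by
  have h := hf.eval₂ C _ (fun _ => isHomogeneous_C _ _)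
    fun j => (isHomogeneous_C_mul_X (σ := Fin 2) ((g : Matrix (Fin 2) (Fin 2) ℂ) 0 j) 0).add
      (isHomogeneous_C_mul_X ((g : Matrix (Fin 2) (Fin 2) ℂ) 1 j) 1)
  rw [one_mul] at h
  exact h

section Action

variable {k s : ℕ} {χ : Fin s → Fin k → ℤ} {n : Fin s → ℕ}

lemma toPoly_Gact_apply (g : (Fin k → ℂˣ) × SL2) (v : BinVec n) (i : Fin s) :
    toPoly (Gact χ n g v i) = C (charVal (χ i) g.1) * subst g.2 (toPoly (v i)) :=
  toPoly_ofPoly ((isHomogeneous_subst (isHomogeneous_toPoly _) _).C_mul _)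

lemma eval_toPoly_Gact_apply (g : (Fin k → ℂˣ) × SL2) (v : BinVec n) (i : Fin s)
    (p : Fin 2 → ℂ) :
    eval p (toPoly (Gact χ n g v i)) =
      charVal (χ i) g.1 * eval (Matrix.vecMul p g.2) (toPoly (v i)) := by
  rw [toPoly_Gact_apply, map_mul, eval_C, eval_subst]

lemma Gact_apply_zero (g : (Fin k → ℂˣ) × SL2) (v : BinVec n) (i : Fin s) :
    Gact χ n g v i 0 =
      charVal (χ i) g.1 * eval ((g.2 : Matrix (Fin 2) (Fin 2) ℂ) 0) (toPoly (v i)) := by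
  rw [← eval_single_toPoly (Gact χ n g v i), eval_toPoly_Gact_apply, Matrix.single_one_vecMul]
  rfl

lemma charVal_mul {k : ℕ} (c : Fin k → ℤ) (τ σ : Fin k → ℂˣ) :
    charVal c (τ * σ) = charVal c τ * charVal c σ := by
  simp [charVal, mul_zpow, Finset.prod_mul_distrib]

lemma Gact_mul (g h : (Fin k → ℂˣ) × SL2) (v : BinVec n) :
    Gact χ n g (Gact χ n h v) = Gact χ n (g * h) v := by
  funext i
  refine toPoly_injective (MvPolynomial.funext fun p => ?_)
  rw [eval_toPoly_Gact_apply, eval_toPoly_Gact_apply, eval_toPoly_Gact_apply, Prod.fst_mul,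
    Prod.snd_mul, charVal_mul, Matrix.SpecialLinearGroup.coe_mul, ← Matrix.vecMul_vecMul]
  ring

lemma Gact_one (v : BinVec n) : Gact χ n 1 v = v := by
  funext i
  refine toPoly_injective (MvPolynomial.funext fun p => ?_)
  simp [eval_toPoly_Gact_apply, charVal]

lemma toPoly_smul {m : ℕ} (a : ℂ) (c : Fin (m + 1) → ℂ) : toPoly (a • c) = C a * toPoly c :=
  MvPolynomial.funext fun p => by simp [eval_toPoly, Finset.mul_sum, mul_assoc]

lemma Gact_smul (g : (Fin k → ℂˣ) × SL2) (a : ℂ) (v : BinVec n) :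
    Gact χ n g (a • v) = a • Gact χ n g v := by
  funext i
  refine toPoly_injective (MvPolynomial.funext fun p => ?_)
  simp only [Pi.smul_apply, toPoly_smul, map_mul, eval_C, eval_toPoly_Gact_apply]
  ring

lemma Gact_diag_apply (τ : Fin k → ℂˣ) (a : ℂˣ) (v : BinVec n) (i : Fin s) (j : Fin (n i + 1)) :
    Gact χ n (τ, upperSL a 0) v i j =
      charVal (χ i) τ * (a : ℂ) ^ (n i - j) * ((a⁻¹ : ℂˣ) : ℂ) ^ (j : ℕ) * v i j := by
  revert j
  rw [← funext_iff]
  refine toPoly_injective (MvPolynomial.funext fun p => ?_)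
  rw [eval_toPoly_Gact_apply, eval_toPoly, eval_toPoly, Finset.mul_sum]
  refine Finset.sum_congr rfl fun j _ => ?_
  simp only [Matrix.vecMul, dotProduct, upperSL, Units.val_inv_eq_inv_val, Matrix.of_apply,
    Matrix.cons_val', Matrix.cons_val_zero, Matrix.cons_val_fin_one, Fin.sum_univ_two,
    Matrix.cons_val_one, mul_zero, add_zero, zero_add, inv_pow]
  ring

lemma mk_mem_pOrbit_iff {v w : BinVec n} (hw : w ≠ 0) :
    Projectivization.mk ℂ w hw ∈ pOrbit χ n v ↔
      ∃ (g : (Fin k → ℂˣ) × SL2) (a : ℂˣ), a • Gact χ n g v = w := by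
  constructor
  · rintro ⟨g, hg, h⟩
    obtain ⟨a, ha⟩ := (Projectivization.mk_eq_mk_iff ℂ _ _ hw hg).mp h
    exact ⟨g, a, ha⟩
  · rintro ⟨g, a, rfl⟩
    have hg : Gact χ n g v ≠ 0 := fun h => hw (by rw [h, smul_zero])
    exact ⟨g, hg, (Projectivization.mk_eq_mk_iff ℂ _ _ hw hg).mpr ⟨a, rfl⟩⟩

lemma mk_mem_pOrbit_self {v : BinVec n} (hv : v ≠ 0) :
    Projectivization.mk ℂ v hv ∈ pOrbit χ n v :=
  (mk_mem_pOrbit_iff hv).mpr ⟨1, 1, by rw [Gact_one, one_smul]⟩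

lemma pOrbit_units_smul (a : ℂˣ) (v : BinVec n) : pOrbit χ n (a • v) = pOrbit χ n v := by
  ext q
  induction q with | h w hw => ?_
  simp only [mk_mem_pOrbit_iff, Units.smul_def, Gact_smul, smul_smul, ← Units.val_mul]
  constructor
  · rintro ⟨g, b, h⟩
    exact ⟨g, b * a, h⟩
  · rintro ⟨g, b, h⟩
    exact ⟨g, b * a⁻¹, by rwa [inv_mul_cancel_right]⟩

lemma pOrbit_rep_mk {v : BinVec n} (hv : v ≠ 0) :
    pOrbit χ n (Projectivization.mk ℂ v hv).rep = pOrbit χ n v := by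
  obtain ⟨a, ha⟩ := Projectivization.exists_smul_eq_mk_rep ℂ v hv
  rw [← ha, pOrbit_units_smul]

end Action

open Topology

lemma exists_eval_ne_zero_subset_of_isOpen {σ : Type} {W : Set (σ → ℂ)}
    (hW : IsOpen[zTop σ] W) {x : σ → ℂ} (hx : x ∈ W) :
    ∃ p : MvPolynomial σ ℂ, eval x p ≠ 0 ∧ {y | eval y p ≠ 0} ⊆ W := by
  induction hW with
  | basic u hu =>
    obtain ⟨p, rfl⟩ := hu
    exact ⟨p, hx, subset_rfl⟩
  | univ => exact ⟨1, by simp, Set.subset_univ _⟩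
  | inter u v _ _ ihu ihv =>
    obtain ⟨p, hp, hpu⟩ := ihu hx.1
    obtain ⟨q, hq, hqv⟩ := ihv hx.2
    refine ⟨p * q, by simp [hp, hq], fun y hy => ?_⟩
    rw [Set.mem_ofPred_eq, map_mul] at hy
    exact ⟨hpu (left_ne_zero_of_mul hy), hqv (right_ne_zero_of_mul hy)⟩
  | sUnion S _ ih =>
    obtain ⟨u, hu, hxu⟩ := hx
    obtain ⟨p, hp, hpu⟩ := ih u hu hxu
    exact ⟨p, hp, fun y hy => ⟨u, hu, hpu hy⟩⟩

def polyCurve {s : ℕ} {n : Fin s → ℕ} (P : (i : Fin s) → Fin (n i + 1) → Polynomial ℂ)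
    (t : ℂ) : BinVec n :=
  fun i j => (P i j).eval t

section PolyCurve

variable {s : ℕ} {n : Fin s → ℕ} {P : (i : Fin s) → Fin (n i + 1) → Polynomial ℂ}

lemma eval_polyCurve (p : MvPolynomial (Σ i : Fin s, Fin (n i + 1)) ℂ) (t : ℂ) :
    eval (fun q => polyCurve P t q.1 q.2) p = (aeval (fun q => P q.1 q.2) p).eval t := by
  rw [← Polynomial.coe_aeval_eq_eval, comp_aeval_apply]
  simp [polyCurve]

/-- `U` contains a basic open set `{p ≠ 0}` around the value at `0`, and `p` restricted to the
curve is a polynomial in `t` that does not vanish at `0`. -/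
lemma eventually_mk_polyCurve_mem (hP : ∀ t, polyCurve P t ≠ 0)
    {U : Set (Projectivization ℂ (BinVec n))} (hU : IsOpen[pTop n] U)
    (h0 : Projectivization.mk ℂ (polyCurve P 0) (hP 0) ∈ U) :
    ∀ᶠ t in Filter.cofinite, Projectivization.mk ℂ (polyCurve P t) (hP t) ∈ U := by
  have hU₁ : IsOpen[TopologicalSpace.induced Subtype.val (vTop n)]
      ((fun v : {v : BinVec n // v ≠ 0} => Projectivization.mk ℂ v.1 v.2) ⁻¹' U) := hU
  obtain ⟨W₁, hW₁, hW₁U⟩ := (@isOpen_induced_iff _ _ (vTop n) _ _).mp hU₁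
  obtain ⟨W₂, hW₂, rfl⟩ := (@isOpen_induced_iff _ _ (zTop _) _ _).mp hW₁
  have hmem : ∀ t, (fun q => polyCurve P t q.1 q.2) ∈ W₂ ↔
      Projectivization.mk ℂ (polyCurve P t) (hP t) ∈ U := fun t =>
    Set.ext_iff.mp hW₁U ⟨_, hP t⟩
  obtain ⟨p, hp0, hpW⟩ := exists_eval_ne_zero_subset_of_isOpen hW₂ ((hmem 0).mpr h0)
  have hF : aeval (fun q => P q.1 q.2) p ≠ 0 := fun h =>
    hp0 (by rw [eval_polyCurve, h, Polynomial.eval_zero])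
  refine Filter.eventually_cofinite.mpr
    ((Polynomial.finite_setOfPred_isRoot hF).subset fun t ht => ?_)
  by_contra hroot
  refine ht ((hmem t).mp (hpW ?_))
  rw [Set.mem_ofPred_eq, eval_polyCurve]
  exact hroot

lemma mk_polyCurve_zero_mem_pClosure (hP : ∀ t, polyCurve P t ≠ 0)
    {S : Set (Projectivization ℂ (BinVec n))}
    (hS : ∀ᶠ t in Filter.cofinite, Projectivization.mk ℂ (polyCurve P t) (hP t) ∈ S) :
    Projectivization.mk ℂ (polyCurve P 0) (hP 0) ∈ pClosure S := by
  rw [pClosure, @mem_closure_iff _ (pTop n)]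
  intro U hU h0
  obtain ⟨t, htU, htS⟩ := ((eventually_mk_polyCurve_mem hP hU h0).and hS).exists
  exact ⟨_, htU, htS⟩

lemma polyCurve_monomial_eq_smul_Gact {χ : Fin s → Fin 1 → ℤ} (w : BinVec n) (e : ℕ)
    (c : Fin s → ℕ) (hc : ∀ i, (c i : ℤ) = e - χ i 0 - n i) {t : ℂ} (ht : t ≠ 0) :
    polyCurve (fun i j => Polynomial.monomial (c i + 2 * j) (w i j)) t =
      t ^ e • Gact χ n (fun _ => (Units.mk0 t ht)⁻¹, upperSL (Units.mk0 t ht)⁻¹ 0) w := by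
  funext i j
  rw [Pi.smul_apply, Pi.smul_apply, Gact_diag_apply, polyCurve, Polynomial.eval_monomial]
  have hj : (j : ℕ) ≤ n i := Fin.is_le j
  have hexp : ((c i + 2 * j : ℕ) : ℤ) = e + -χ i 0 + -((n i - j : ℕ) : ℤ) + j := by
    push_cast [Nat.cast_sub hj, hc]; ring
  simp only [charVal, Finset.univ_unique, Fin.default_eq_zero, Finset.prod_singleton,
    Units.val_inv_eq_inv_val, Units.val_mk0, inv_inv, inv_zpow, smul_eq_mul]
  rw [← zpow_natCast, hexp, zpow_add₀ ht, zpow_add₀ ht, zpow_add₀ ht, zpow_neg, zpow_neg,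
    zpow_natCast, zpow_natCast, zpow_natCast, inv_pow]
  ring

end PolyCurve

abbrev exampleChars : Fin 5 → Fin 1 → ℤ :=
  ![fun _ => 1, fun _ => 1, fun _ => 2, fun _ => 3, fun _ => 4]

abbrev exampleDegs : Fin 5 → ℕ := ![1, 4, 4, 3, 2]

def limitVec (d : ℂ) : BinVec exampleDegs :=
  fun i => Pi.single 0 (![0, 0, (d - 1) ^ 2, d * (d - 1), 1] i)

lemma limitVec_ne_zero (d : ℂ) : limitVec d ≠ 0 := fun h => by
  have h40 := congrFun (congrFun h 4) 0
  simp only [limitVec] at h40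
  rw [Pi.single_eq_same] at h40
  simp at h40

lemma sq_eq_sq_of_pOrbit_limitVec_eq {d d' : ℂ} (hd' : d' ≠ 1)
    (h : pOrbit exampleChars exampleDegs (limitVec d) =
      pOrbit exampleChars exampleDegs (limitVec d')) :
    d ^ 2 = d' ^ 2 := by
  have hmem := mk_mem_pOrbit_self (χ := exampleChars) (limitVec_ne_zero d')
  rw [← h] at hmem
  obtain ⟨g, a, hg⟩ := (mk_mem_pOrbit_iff (limitVec_ne_zero d')).mp hmem
  have lead : ∀ i, (a : ℂ) * (charVal (exampleChars i) g.1 *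
      ![0, 0, (d - 1) ^ 2, d * (d - 1), 1] i *
        (g.2 : Matrix (Fin 2) (Fin 2) ℂ) 0 0 ^ exampleDegs i) =
      ![0, 0, (d' - 1) ^ 2, d' * (d' - 1), 1] i := by
    intro i
    have := congrFun (congrFun hg i) 0
    rw [Units.smul_def, Pi.smul_apply, Pi.smul_apply, Gact_apply_zero, limitVec,
      toPoly_single_zero] at this
    simpa [limitVec, mul_assoc] using this
  set T : ℂ := ((g.1 0 : ℂˣ) : ℂ)
  set x := (g.2 : Matrix (Fin 2) (Fin 2) ℂ) 0 0
  have e2 : a * (T ^ 2 * (d - 1) ^ 2 * x ^ 4) = (d' - 1) ^ 2 := by simpa [charVal] using lead 2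
  have e3 : a * (T ^ 3 * (d * (d - 1)) * x ^ 3) = d' * (d' - 1) := by simpa [charVal] using lead 3
  have e4 : a * (T ^ 4 * x ^ 2) = 1 := by simpa [charVal] using lead 4
  refine mul_right_cancel₀ (pow_ne_zero 2 (sub_ne_zero.mpr hd')) ?_
  linear_combination (d' * (d' - 1) + a * (T ^ 3 * (d * (d - 1)) * x ^ 3)) * e3
    - d ^ 2 * (a * (T ^ 2 * (d - 1) ^ 2 * x ^ 4)) * e4 - d ^ 2 * e2

def exampleCurve (v : BinVec exampleDegs) (d : ℂ) :
    (i : Fin 5) → Fin (exampleDegs i + 1) → Polynomial ℂ :=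
  fun i j => Polynomial.monomial (![4, 1, 0, 0, 0] i + 2 * j)
    (Gact exampleChars exampleDegs (1, upperSL 1 d) v i j)

lemma polyCurve_exampleCurve_eq_smul_Gact (v : BinVec exampleDegs) (d : ℂ) {t : ℂ} (ht : t ≠ 0) :
    polyCurve (exampleCurve v d) t = t ^ 6 • Gact exampleChars exampleDegs
      ((fun _ => (Units.mk0 t ht)⁻¹, upperSL (Units.mk0 t ht)⁻¹ 0) * (1, upperSL 1 d)) v := by
  rw [← Gact_mul]
  exact polyCurve_monomial_eq_smul_Gact _ 6 _ (by decide) ht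

lemma polyCurve_exampleCurve_ne_zero {v : BinVec exampleDegs} (h4 : toPoly (v 4) = X 0 ^ 2)
    (d t : ℂ) : polyCurve (exampleCurve v d) t ≠ 0 := fun h => by
  have h40 := congrFun (congrFun h 4) 0
  simp only [polyCurve, exampleCurve, Gact_apply_zero] at h40
  rw [h4] at h40
  simp [charVal, upperSL] at h40

lemma polyCurve_exampleCurve_zero {v : BinVec exampleDegs}
    (h2 : toPoly (v 2) = X 0 ^ 2 * (X 1 - X 0) ^ 2)
    (h3 : toPoly (v 3) = X 0 * X 1 * (X 1 - X 0)) (h4 : toPoly (v 4) = X 0 ^ 2) (d : ℂ) :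
    polyCurve (exampleCurve v d) 0 = limitVec d := by
  funext i j
  rcases Fin.eq_zero_or_eq_succ j with rfl | ⟨j, rfl⟩
  · simp only [limitVec, Pi.single_eq_same, polyCurve, exampleCurve, Gact_apply_zero]
    obtain rfl | rfl | rfl | rfl | rfl : i = 0 ∨ i = 1 ∨ i = 2 ∨ i = 3 ∨ i = 4 := by
      fin_cases i <;> simp
    · simp
    · simp
    · rw [h2]; simp [charVal, upperSL]
    · rw [h3]; simp [charVal, upperSL]
    · rw [h4]; simp [charVal, upperSL]
  · rw [limitVec, Pi.single_eq_of_ne (Fin.succ_ne_zero j), polyCurve, exampleCurve,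
      Polynomial.eval_monomial, zero_pow (by simp), mul_zero]

lemma mk_limitVec_mem_pClosure {v : BinVec exampleDegs}
    (h2 : toPoly (v 2) = X 0 ^ 2 * (X 1 - X 0) ^ 2)
    (h3 : toPoly (v 3) = X 0 * X 1 * (X 1 - X 0)) (h4 : toPoly (v 4) = X 0 ^ 2) (d : ℂ) :
    Projectivization.mk ℂ (limitVec d) (limitVec_ne_zero d) ∈
      pClosure (pOrbit exampleChars exampleDegs v) := by
  have hne := polyCurve_exampleCurve_ne_zero h4 d
  have hmem : ∀ᶠ t in Filter.cofinite,
      Projectivization.mk ℂ _ (hne t) ∈ pOrbit exampleChars exampleDegs v :=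
    (Filter.eventually_cofinite_ne 0).mono fun t ht => (mk_mem_pOrbit_iff _).mpr
      ⟨_, Units.mk0 (t ^ 6) (pow_ne_zero 6 ht), (polyCurve_exampleCurve_eq_smul_Gact v d ht).symm⟩
  convert mk_polyCurve_zero_mem_pClosure hne hmem using 2
  exact (polyCurve_exampleCurve_zero h2 h3 h4 d).symm

theorem example_infinitely_many_orbits_general
    (v : BinVec ![1, 4, 4, 3, 2])
    (h2 : toPoly (v 2) = MvPolynomial.X 0 ^ 2 * (MvPolynomial.X 1 - MvPolynomial.X 0) ^ 2)
    (h3 : toPoly (v 3) = MvPolynomial.X 0 * MvPolynomial.X 1 *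
      (MvPolynomial.X 1 - MvPolynomial.X 0))
    (h4 : toPoly (v 4) = MvPolynomial.X 0 ^ 2) :
    {o : Set (Projectivization ℂ (BinVec ![1, 4, 4, 3, 2])) |
      ∃ q ∈ pClosure
        (pOrbit (![fun _ => 1, fun _ => 1, fun _ => 2, fun _ => 3, fun _ => 4] : Fin 5 → Fin 1 → ℤ)
          ![1, 4, 4, 3, 2] v),
        o = pOrbit (![fun _ => 1, fun _ => 1, fun _ => 2, fun _ => 3, fun _ => 4] : Fin 5 → Fin 1 → ℤ)
          ![1, 4, 4, 3, 2] q.rep}.Infinite := by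
  refine Set.infinite_of_injective_forall_mem
    (f := fun m : ℕ => pOrbit exampleChars exampleDegs (limitVec (m + 2))) (fun m m' h => ?_)
    fun m => ⟨_, mk_limitVec_mem_pClosure h2 h3 h4 _, (pOrbit_rep_mk _).symm⟩
  have hsq := sq_eq_sq_of_pOrbit_limitVec_eq (by norm_cast; omega) h
  exact Nat.add_right_cancel
    (Nat.pow_left_injective two_ne_zero (by exact_mod_cast hsq : (m + 2) ^ 2 = (m' + 2) ^ 2))

/-- **Example 1.** For `k = 1`, `V = V_{1,1} ⊕ V_{1,4} ⊕ V_{2,4} ⊕ V_{3,3} ⊕ V_{4,2}`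
and `v = (v₁, x²y², x²(y-x)², xy(y-x), x²)` with `v₁` any nonzero linear form, the
closure of `G⟨v⟩ ⊆ ℙ(V)` contains infinitely many `G`-orbits. -/
theorem example_infinitely_many_orbits
    (v : BinVec ![1, 4, 4, 3, 2]) (h0 : v 0 ≠ 0)
    (h1 : toPoly (v 1) = MvPolynomial.X 0 ^ 2 * MvPolynomial.X 1 ^ 2)
    (h2 : toPoly (v 2) = MvPolynomial.X 0 ^ 2 * (MvPolynomial.X 1 - MvPolynomial.X 0) ^ 2)
    (h3 : toPoly (v 3) = MvPolynomial.X 0 * MvPolynomial.X 1 *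
      (MvPolynomial.X 1 - MvPolynomial.X 0))
    (h4 : toPoly (v 4) = MvPolynomial.X 0 ^ 2) :
    {o : Set (Projectivization ℂ (BinVec ![1, 4, 4, 3, 2])) |
      ∃ q ∈ pClosure
        (pOrbit (![fun _ => 1, fun _ => 1, fun _ => 2, fun _ => 3, fun _ => 4] : Fin 5 → Fin 1 → ℤ)
          ![1, 4, 4, 3, 2] v),
        o = pOrbit (![fun _ => 1, fun _ => 1, fun _ => 2, fun _ => 3, fun _ => 4] : Fin 5 → Fin 1 → ℤ)
          ![1, 4, 4, 3, 2] q.rep}.Infinite :=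
  example_infinitely_many_orbits_general v h2 h3 h4
end
end

section
/- Let $v(d_1,R_1)$ and $v(d_2,R_2)$ be nonzero standard vectors such that some index $i\in I(R_1)$ has $n_i\geq 1$, and suppose $g\in G$ satisfies $g\cdot v(d_1,R_1)=v(d_2,R_2)$. Then $g\in B$, i.e., the $SL_2(\mathbb{C})$-component of $g$ is upper-triangular. Consequently, two standard vectors lying in the same $G$-orbit lie in the same $B$-orbit. -/
open scoped BigOperators

noncomputable section

/-!
A standard vector has, in every component, only an `x^{nᵢ}` coefficient. The element
`g = (t, !![κ, λ; μ, ν])` sends `pᵢ(d₁) x^{nᵢ}` to `χᵢ(t) pᵢ(d₁) (κx + μy)^{nᵢ}`, whose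
`y^{nᵢ}`-coefficient is `χᵢ(t) pᵢ(d₁) μ^{nᵢ}`. For an index `i ∈ I(R₁)` with `nᵢ ≥ 1` this
coefficient must vanish, because it does in `v(d₂, R₂)`; as `χᵢ(t)` and `pᵢ(d₁)` are nonzero,
`μ = 0`. Then `g` itself is in `B`.
-/

open MvPolynomial

lemma ofPoly_C_mul_X_pow (n : ℕ) (c : ℂ) (j : Fin (n + 1)) :
    ofPoly n (C c * X 0 ^ n) j = if (j : ℕ) = 0 then c else 0 := by
  rw [ofPoly, X_pow_eq_monomial, C_mul_monomial, mul_one, coeff_monomial]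
  congr 1
  simp only [monExp, eq_iff_iff]
  refine ⟨fun h => ?_, fun h => by simp [h]⟩
  simpa using (DFunLike.congr_fun h 1).symm

lemma toPoly_ofPoly_C_mul_X_pow (n : ℕ) (c : ℂ) :
    toPoly (ofPoly n (C c * X 0 ^ n)) = C c * X 0 ^ n := by
  simp only [toPoly, ofPoly_C_mul_X_pow, Fin.val_eq_zero_iff, apply_ite (monomial _),
    map_zero, Finset.sum_ite_eq', Finset.mem_univ, if_true]
  simp [monExp, X_pow_eq_monomial, C_mul_monomial]

lemma ofPoly_last (n : ℕ) (f : MvPolynomial (Fin 2) ℂ) :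
    ofPoly n f (Fin.last n) = coeff (Finsupp.single 1 n) f := by
  simp [ofPoly, monExp]

lemma coeff_single_one_mul_linear_form (p : MvPolynomial (Fin 2) ℂ) (a b : ℂ) (m : ℕ) :
    coeff (Finsupp.single 1 (m + 1)) (p * (C a * X 0 + C b * X 1)) =
      b * coeff (Finsupp.single 1 m) p := by
  rw [mul_add, coeff_add, ← mul_assoc, coeff_mul_X', if_neg (by simp), zero_add, ← mul_assoc,
    Finsupp.single_add, coeff_mul_X, mul_comm p, coeff_C_mul]

lemma coeff_single_one_linear_form_pow (a b : ℂ) (m : ℕ) :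
    coeff (Finsupp.single (1 : Fin 2) m) ((C a * X 0 + C b * X 1) ^ m) = b ^ m := by
  induction m with
  | zero => simp
  | succ m ih => rw [pow_succ, coeff_single_one_mul_linear_form, ih, pow_succ']

lemma subst_C_mul_X_pow (g : SL2) (c : ℂ) (n : ℕ) :
    subst g (C c * X 0 ^ n) =
      C c * (C ((g : Matrix (Fin 2) (Fin 2) ℂ) 0 0) * X 0 +
        C ((g : Matrix (Fin 2) (Fin 2) ℂ) 1 0) * X 1) ^ n := by
  simp [subst, algebraMap_eq]

lemma charVal_ne_zero {k : ℕ} (χ : Fin k → ℤ) (t : Fin k → ℂˣ) : charVal χ t ≠ 0 :=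
  Finset.prod_ne_zero_iff.mpr fun _ _ => zpow_ne_zero _ (Units.ne_zero _)

lemma pval_ne_zero (e : ℂ →₀ ℕ) (d : ℂ) : pval e d ≠ 0 :=
  Finset.prod_ne_zero_iff.mpr fun _ ha =>
    pow_ne_zero _ (sub_ne_zero_of_ne (Finset.notMem_singleton.mp (Finset.mem_sdiff.mp ha).2))

section StandardVec

variable {k s : ℕ} (χ : Fin s → Fin k → ℤ) (n : Fin s → ℕ) (e : Fin s → ℂ →₀ ℕ)
  (d : ℂ) (R : (Fin k → ℚ) × ℚ)

lemma standardVec_last_eq_zero {i : Fin s} (hi : 1 ≤ n i) :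
    standardVec χ n e d R i (Fin.last (n i)) = 0 := by
  unfold standardVec
  split_ifs
  · rw [ofPoly_C_mul_X_pow, if_neg (by rw [Fin.val_last]; omega)]
  · rfl

lemma Gact_standardVec_last (g : (Fin k → ℂˣ) × SL2) {i : Fin s}
    (hi : pairQ (χ i) (n i) R = 0) :
    Gact χ n g (standardVec χ n e d R) i (Fin.last (n i)) =
      charVal (χ i) g.1 * (pval (e i) d * (g.2 : Matrix (Fin 2) (Fin 2) ℂ) 1 0 ^ n i) := by
  rw [Gact, standardVec, if_pos hi, toPoly_ofPoly_C_mul_X_pow, subst_C_mul_X_pow, ofPoly_last,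
    coeff_C_mul, coeff_C_mul, coeff_single_one_linear_form_pow]

end StandardVec

lemma exists_upperSL_eq {g : SL2} (hg : (g : Matrix (Fin 2) (Fin 2) ℂ) 1 0 = 0) :
    ∃ (κ : ℂˣ) (l : ℂ), upperSL κ l = g := by
  have hdet : (g : Matrix (Fin 2) (Fin 2) ℂ) 0 0 * g 1 1 = 1 := by
    simpa [hg] using (Matrix.det_fin_two _).symm.trans g.det_coe
  refine ⟨⟨g 0 0, g 1 1, hdet, by rw [mul_comm, hdet]⟩, g 0 1, ?_⟩
  ext a b
  fin_cases a <;> fin_cases b <;> simp [upperSL, hg]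

theorem standard_vectors_same_orbit_implies_borel_general (k s : ℕ) (χ : Fin s → Fin k → ℤ)
    (n : Fin s → ℕ) (e : Fin s → ℂ →₀ ℕ)
    (d1 d2 : ℂ) (R1 R2 : (Fin k → ℚ) × ℚ)
    (hdeg : ∃ i, pairQ (χ i) (n i) R1 = 0 ∧ 1 ≤ n i)
    (g : (Fin k → ℂˣ) × SL2)
    (hg : Gact χ n g (standardVec χ n e d1 R1) = standardVec χ n e d2 R2) :
    (g.2 : Matrix (Fin 2) (Fin 2) ℂ) 1 0 = 0 ∧
    ∃ (t : Fin k → ℂˣ) (κ : ℂˣ) (l : ℂ),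
      Gact χ n (t, upperSL κ l) (standardVec χ n e d1 R1) =
        standardVec χ n e d2 R2 := by
  obtain ⟨i, hi, hni⟩ := hdeg
  have hcoeff :
      charVal (χ i) g.1 * (pval (e i) d1 * (g.2 : Matrix (Fin 2) (Fin 2) ℂ) 1 0 ^ n i) = 0 := by
    rw [← Gact_standardVec_last χ n e d1 R1 g hi, hg, standardVec_last_eq_zero χ n e d2 R2 hni]
  have hlower : (g.2 : Matrix (Fin 2) (Fin 2) ℂ) 1 0 = 0 := by
    simpa only [mul_eq_zero, charVal_ne_zero, pval_ne_zero, false_or,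
      pow_eq_zero_iff (by omega : n i ≠ 0)] using hcoeff
  obtain ⟨κ, l, hκl⟩ := exists_upperSL_eq hlower
  exact ⟨hlower, g.1, κ, l, by rwa [hκl]⟩

/-- If `g ∈ G` maps a nonzero standard vector `v(d₁, R₁)` to a nonzero standard vector
`v(d₂, R₂)` and some index on the face `I(R₁)` has `nᵢ ≥ 1`, then the `SL₂(ℂ)`-component
of `g` is upper triangular; consequently standard vectors in the same `G`-orbit lie in
the same `B`-orbit. -/
theorem standard_vectors_same_orbit_implies_borel (k s : ℕ) (χ : Fin s → Fin k → ℤ)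
    (n : Fin s → ℕ) (e : Fin s → ℂ →₀ ℕ) (he : ∀ i, eInf (e i) ≤ n i)
    (d1 d2 : ℂ) (R1 R2 : (Fin k → ℚ) × ℚ)
    (hne1 : standardVec χ n e d1 R1 ≠ 0) (hne2 : standardVec χ n e d2 R2 ≠ 0)
    (hdeg : ∃ i, pairQ (χ i) (n i) R1 = 0 ∧ 1 ≤ n i)
    (g : (Fin k → ℂˣ) × SL2)
    (hg : Gact χ n g (standardVec χ n e d1 R1) = standardVec χ n e d2 R2) :
    (g.2 : Matrix (Fin 2) (Fin 2) ℂ) 1 0 = 0 ∧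
    ∃ (t : Fin k → ℂˣ) (κ : ℂˣ) (l : ℂ),
      Gact χ n (t, upperSL κ l) (standardVec χ n e d1 R1) =
        standardVec χ n e d2 R2 :=
  standard_vectors_same_orbit_implies_borel_general k s χ n e d1 d2 R1 R2 hdeg g hg
end
end
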